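/- Suppose M is a model of Kripke–Platek set theory (KP) and M contains an ordinal a whose ∈^M-predecessors are isomorphic to a (true) ordinal α. Then the structure (V_a)^M, computed inside M (which need not be an element of M), is wellfounded. -/

import Mathlib

open FirstOrder Language

noncomputable section

namespace LongBorel

/-! ### Games of length `ω` on `ℕ` -/

/-- Baire space, identified with `ℝ`. -/
abbrev Baire : Type := ℕ → ℕ

/-- A run `x` of a length-`ω` game on `ℕ` is consistent with the strategy `σ`
for Player I, who moves at even stages. -/
def ConsI (σ : List ℕ → ℕ) (x : Baire) : Prop :=
  ∀ n, Even n → x n = σ (List.ofFn fun i : Fin n => x i)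

/-- Consistency with a strategy `τ` for Player II, who moves at odd stages. -/
def ConsII (τ : List ℕ → ℕ) (x : Baire) : Prop :=
  ∀ n, ¬ Even n → x n = τ (List.ofFn fun i : Fin n => x i)

/-- `σ` is a winning strategy for Player I in the length-`ω` game with payoff `A`. -/
def WinsI (A : Set Baire) (σ : List ℕ → ℕ) : Prop :=
  ∀ x, ConsI σ x → x ∈ A

/-- `τ` is a winning strategy for Player II in the length-`ω` game with payoff `A`. -/
def WinsII (A : Set Baire) (τ : List ℕ → ℕ) : Prop :=
  ∀ x, ConsII τ x → x ∉ A

/-- The Gale-Stewart game of length `ω` on `ℕ` with payoff `A` is determined. -/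
def Determined (A : Set Baire) : Prop :=
  (∃ σ, WinsI A σ) ∨ (∃ τ, WinsII A τ)

/-! ### Games of length `ω` with moves in `ℝ` -/

/-- Code an `ω`-sequence of reals as a single real. -/
def codeSeq (p : ℕ → Baire) : Baire := fun n => p (Nat.unpair n).1 (Nat.unpair n).2

def RConsI (σ : List Baire → Baire) (p : ℕ → Baire) : Prop :=
  ∀ n, Even n → p n = σ (List.ofFn fun i : Fin n => p i)

def RConsII (τ : List Baire → Baire) (p : ℕ → Baire) : Prop :=
  ∀ n, ¬ Even n → p n = τ (List.ofFn fun i : Fin n => p i)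

def RWinsI (B : Set Baire) (σ : List Baire → Baire) : Prop :=
  ∀ p, RConsI σ p → codeSeq p ∈ B

def RWinsII (B : Set Baire) (τ : List Baire → Baire) : Prop :=
  ∀ p, RConsII τ p → codeSeq p ∉ B

def RDetermined (B : Set Baire) : Prop :=
  (∃ σ, RWinsI B σ) ∨ (∃ τ, RWinsII B τ)

/-- The game quantifier `Game^ℝ` applied to `A ⊆ ℝ × ℝ`:  the set of `x` such
that Player I has a winning strategy in the length-`ω` game with moves in `ℝ`
and payoff `A_x = {y | (x, y) ∈ A}` (plays coded as single reals). -/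
def gameR (A : Set (Baire × Baire)) : Set Baire :=
  {x | ∃ σ : List Baire → Baire, ∀ p, RConsI σ p → (x, codeSeq p) ∈ A}

/-- Interleaving pairing on Baire space. -/
def pairB (x y : Baire) : Baire := fun n => if n % 2 = 0 then x (n / 2) else y (n / 2)

def leftB (z : Baire) : Baire := fun n => z (2 * n)
def rightB (z : Baire) : Baire := fun n => z (2 * n + 1)

/-- The pointclass `Game^ℝ(boldface Δ¹₁)`: sets of the form `Game^ℝ A` for `A` Borel. -/
def GameRDelta11 : Set (Set Baire) :=
  {B | ∃ A : Set (Baire × Baire), MeasurableSet A ∧ B = gameR A}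

/-- A binary relation on the reals, coded as a pointset. -/
def relCode (R : Set (Baire × Baire)) : Set Baire := {z | (leftB z, rightB z) ∈ R}

/-- `R` is a prewellordering of the reals of length `α`. -/
def IsPWOOfLength (R : Set (Baire × Baire)) (α : Ordinal) : Prop :=
  ∃ ρ : Baire → Ordinal,
    (∀ x y, (x, y) ∈ R ↔ ρ x ≤ ρ y) ∧ (∀ x, ρ x < α) ∧ ∀ β < α, ∃ x, ρ x = β

/-- `γ¹₁`, the supremum of the lengths of prewellorderings of `ℝ` in
`Game^ℝ(boldface Δ¹₁)`. -/
def gamma11 : Ordinal :=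
  sSup {α | ∃ R, IsPWOOfLength R α ∧ relCode R ∈ GameRDelta11}

/-! ### Games of length `ω²` on `ℕ` -/

/-- Consistency of a run `x` (where `x i j` is the `j`-th move of the `i`-th
`ω`-block) of a length-`ω²` game with a strategy `σ` for Player I, who moves at
even stages of each block (in particular at all limit stages).  A position is a
pair (list of completed blocks, moves of the current partial block). -/
def LongConsI (σ : List Baire × List ℕ → ℕ) (x : ℕ → ℕ → ℕ) : Prop :=
  ∀ i j, Even j →
    x i j = σ (List.ofFn fun k : Fin i => x k, List.ofFn fun l : Fin j => x i l)

def LongConsII (τ : List Baire × List ℕ → ℕ) (x : ℕ → ℕ → ℕ) : Prop :=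
  ∀ i j, ¬ Even j →
    x i j = τ (List.ofFn fun k : Fin i => x k, List.ofFn fun l : Fin j => x i l)

/-- The real coding the sequence of reals produced in a run of a game of
length `ω²`, via a fixed Borel bijection `ℕ × ℕ → ℕ`. -/
def longPlay (x : ℕ → ℕ → ℕ) : Baire := fun n => x (Nat.unpair n).1 (Nat.unpair n).2

def LongWinsI (A : Set Baire) (σ : List Baire × List ℕ → ℕ) : Prop :=
  ∀ x, LongConsI σ x → longPlay x ∈ A

def LongWinsII (A : Set Baire) (τ : List Baire × List ℕ → ℕ) : Prop :=
  ∀ x, LongConsII τ x → longPlay x ∉ A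

/-- Determinacy of the game of length `ω²` on `ℕ` with payoff `A`. -/
def LongDetermined (A : Set Baire) : Prop :=
  (∃ σ, LongWinsI A σ) ∨ (∃ τ, LongWinsII A τ)

/-- Borel determinacy for games of length `ω²` on `ℕ`. -/
def LongBorelDeterminacy : Prop :=
  ∀ A : Set Baire, MeasurableSet A → LongDetermined A


universe u

/-! ### The first-order language of set theory and satisfaction -/

/-- The language of set theory: a single binary relation `∈`. -/
def setLang : FirstOrder.Language :=
  ⟨fun _ => Empty, fun n => match n with | 2 => Unit | _ => Empty⟩

/-- The membership relation symbol. -/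
def memRel : setLang.Relations 2 := Unit.unit

/-- The `setLang`-structure determined by a binary relation `E` on `M`. -/
def memStruc (M : Type u) (E : M → M → Prop) : setLang.Structure M where
  funMap := fun {_} f _ => Empty.elim f
  RelMap := fun {n} r v =>
    match n, r, v with
    | 2, _, v => E (v 0) (v 1)
    | 0, r, _ => Empty.elim r
    | 1, r, _ => Empty.elim r
    | (_+3), r, _ => Empty.elim r

/-- Satisfaction of a bounded formula of the language of set theory in the
structure `(M, E)`, under the valuation `v`. -/
def SatBF {M : Type u} (E : M → M → Prop) {n : ℕ}
    (φ : setLang.BoundedFormula Empty n) (v : Fin n → M) : Prop :=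
  letI := memStruc M E
  φ.Realize (fun e => e.elim) v

/-- The atomic formula `t ∈ u`. -/
def memBF {n : ℕ} (t u : setLang.Term (Empty ⊕ Fin n)) : setLang.BoundedFormula Empty n :=
  memRel.boundedFormula₂ t u

/-- The `Δ₀` (bounded) formulas of the language of set theory: the smallest
class containing the atomic formulas and closed under propositional
connectives and bounded quantification `∀ x ∈ t`. -/
inductive IsDelta0 : ∀ {n : ℕ}, setLang.BoundedFormula Empty n → Prop
  | falsum {n : ℕ} : IsDelta0 (n := n) .falsum
  | equal {n : ℕ} (t u : setLang.Term (Empty ⊕ Fin n)) : IsDelta0 (.equal t u)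
  | mem {n : ℕ} (t u : setLang.Term (Empty ⊕ Fin n)) : IsDelta0 (memBF t u)
  | imp {n : ℕ} {φ ψ : setLang.BoundedFormula Empty n} :
      IsDelta0 φ → IsDelta0 ψ → IsDelta0 (φ.imp ψ)
  | ball {n : ℕ} (t : setLang.Term (Empty ⊕ Fin n)) {φ : setLang.BoundedFormula Empty (n + 1)} :
      IsDelta0 φ →
      IsDelta0 (BoundedFormula.all
        ((memBF (Term.var (Sum.inr (Fin.last n))) (t.relabel (Sum.map id Fin.castSucc))).imp φ))

/-- The `Σ₁` formulas: existential quantifications of `Δ₀` formulas. -/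
inductive IsSigma1 : ∀ {n : ℕ}, setLang.BoundedFormula Empty n → Prop
  | of_delta0 {n : ℕ} {φ : setLang.BoundedFormula Empty n} : IsDelta0 φ → IsSigma1 φ
  | ex {n : ℕ} {φ : setLang.BoundedFormula Empty (n + 1)} : IsSigma1 φ → IsSigma1 φ.ex

section Axioms

variable {M : Type u} (E : M → M → Prop)

/-- Extensionality in `(M, E)`. -/
def SatExt : Prop := ∀ a b : M, (∀ x, E x a ↔ E x b) → a = b

/-- Pairing in `(M, E)`. -/
def SatPairing : Prop := ∀ a b : M, ∃ p, ∀ x, E x p ↔ (x = a ∨ x = b)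

/-- Union in `(M, E)`. -/
def SatUnion : Prop := ∀ a : M, ∃ u, ∀ x, E x u ↔ ∃ y, E y a ∧ E x y

/-- Power set in `(M, E)`. -/
def SatPowerset : Prop := ∀ a : M, ∃ p, ∀ x, E x p ↔ (∀ y, E y x → E y a)

/-- Infinity in `(M, E)`. -/
def SatInfinity : Prop :=
  ∃ w : M, (∃ z, E z w ∧ ∀ t, ¬ E t z) ∧
    ∀ x, E x w → ∃ s, E s w ∧ ∀ t, E t s ↔ (E t x ∨ t = x)

/-- The instance of the separation scheme given by `φ`. -/
def SatSepFor {n : ℕ} (φ : setLang.BoundedFormula Empty (n + 1)) : Prop :=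
  ∀ (p : Fin n → M) (a : M), ∃ b : M, ∀ x : M,
    E x b ↔ (E x a ∧ SatBF E φ (Fin.snoc p x))

/-- The full separation scheme in `(M, E)`. -/
def SatSeparation : Prop :=
  ∀ (n : ℕ) (φ : setLang.BoundedFormula Empty (n + 1)), SatSepFor E φ

/-- The `Δ₀`-separation scheme in `(M, E)`. -/
def SatDelta0Separation : Prop :=
  ∀ (n : ℕ) (φ : setLang.BoundedFormula Empty (n + 1)), IsDelta0 φ → SatSepFor E φ

/-- The `Δ₀`-collection scheme in `(M, E)`. -/
def SatDelta0Collection : Prop :=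
  ∀ (n : ℕ) (φ : setLang.BoundedFormula Empty (n + 2)), IsDelta0 φ →
    ∀ (p : Fin n → M) (a : M),
      (∀ x, E x a → ∃ y, SatBF E φ (Fin.snoc (Fin.snoc p x) y)) →
      ∃ b, ∀ x, E x a → ∃ y, E y b ∧ SatBF E φ (Fin.snoc (Fin.snoc p x) y)

/-- The replacement scheme in `(M, E)`. -/
def SatReplacement : Prop :=
  ∀ (n : ℕ) (φ : setLang.BoundedFormula Empty (n + 2)) (p : Fin n → M) (a : M),
    (∀ x, E x a → ∃! y, SatBF E φ (Fin.snoc (Fin.snoc p x) y)) →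
    ∃ b, ∀ y, E y b ↔ ∃ x, E x a ∧ SatBF E φ (Fin.snoc (Fin.snoc p x) y)

/-- The foundation scheme (`∈`-minimal elements for definable classes). -/
def SatFoundation : Prop :=
  ∀ (n : ℕ) (φ : setLang.BoundedFormula Empty (n + 1)) (p : Fin n → M),
    (∃ x, SatBF E φ (Fin.snoc p x)) →
    ∃ x, SatBF E φ (Fin.snoc p x) ∧ ∀ y, E y x → ¬ SatBF E φ (Fin.snoc p y)

/-- The axiom of choice in `(M, E)`: every family of nonempty pairwise
disjoint sets has a transversal. -/
def SatChoice : Prop :=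
  ∀ a : M, (∀ x, E x a → ∃ y, E y x) →
    (∀ x x', E x a → E x' a → x ≠ x' → ¬ ∃ y, E y x ∧ E y x') →
    ∃ c, ∀ x, E x a → ∃! y, E y x ∧ E y c

/-- Kripke-Platek set theory `KP` holds in `(M, E)`. -/
def SatKP : Prop :=
  SatExt E ∧ SatPairing E ∧ SatUnion E ∧ SatDelta0Separation E ∧
    SatDelta0Collection E ∧ SatFoundation E

/-- `KP` + full Separation holds in `(M, E)`. -/
def SatKPSep : Prop := SatKP E ∧ SatSeparation E

/-- Zermelo set theory `Z` holds in `(M, E)`. -/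
def SatZ : Prop :=
  SatExt E ∧ SatPairing E ∧ SatUnion E ∧ SatPowerset E ∧ SatInfinity E ∧
    SatFoundation E ∧ SatSeparation E

/-- Zermelo set theory with Choice `ZC` holds in `(M, E)`. -/
def SatZC : Prop := SatZ E ∧ SatChoice E

/-- `ZFC` holds in `(M, E)`. -/
def SatZFC : Prop := SatZC E ∧ SatReplacement E

end Axioms


/-! ### Set-theoretic infrastructure over `ZFSet` -/

/-- The membership relation on a class of sets. -/
def memOn (S : Set ZFSet.{0}) : S → S → Prop := fun x y => (x : ZFSet) ∈ (y : ZFSet)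

/-- A transitive class of sets. -/
def IsTransitiveClass (S : Set ZFSet.{0}) : Prop :=
  ∀ x ∈ S, ∀ y : ZFSet, y ∈ x → y ∈ S

/-- The von Neumann natural number `n`. -/
def natToZF : ℕ → ZFSet.{0} := fun n => n.rec ∅ (fun _ ih => insert ih ih)

/-- The set coding a real `x : ℕ → ℕ`, i.e. the set of pairs `(n, x n)`. -/
def zfReal (x : Baire) : ZFSet.{0} :=
  ZFSet.sep (fun p => ∃ n : ℕ, p = ZFSet.pair (natToZF n) (natToZF (x n)))
    (ZFSet.powerset (ZFSet.powerset ZFSet.omega))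

/-- The class of (codes of) reals. -/
def zfReals : Set ZFSet.{0} := Set.range zfReal

/-- The class `V_α` of all sets of rank `< α`. -/
def VclassOf (α : Ordinal.{0}) : Set ZFSet.{0} := {x | x.rank < α}

/-- The subsets of the class `S` which are definable (with parameters) over the
`∈`-structure on `S`, regarded as elements of the next level of the
constructible hierarchy. -/
def definableSubsets (S : Set ZFSet.{0}) : Set ZFSet.{0} :=
  {x | ∃ (n : ℕ) (φ : setLang.BoundedFormula Empty (n + 1)) (p : Fin n → S),
    x.toSet = {y : ZFSet | ∃ h : y ∈ S, SatBF (memOn S) φ (Fin.snoc p ⟨y, h⟩)}}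

/-- The constructible hierarchy over the reals: `L_0(ℝ) = V_{ω+1}`,
`L_{α+1}(ℝ)` consists of the subsets of `L_α(ℝ)` definable with parameters
over `L_α(ℝ)`, and unions are taken at limits. -/
def LofR (α : Ordinal.{0}) : Set ZFSet.{0} :=
  Ordinal.limitRecOn α {x | x.rank ≤ Ordinal.omega0}
    (fun _ ih => definableSubsets ih)
    (fun o _ ih => {x | ∃ β, ∃ h : β < o, x ∈ ih β h})

/-- The inner model `L(ℝ)` (as a class). -/
def LReals : Set ZFSet.{0} := ⋃ α : Ordinal.{0}, LofR α

/-- `V_α` exists as an element of the (transitive) class `S`. -/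
def HasVIn (S : Set ZFSet.{0}) (α : Ordinal.{0}) : Prop :=
  ∃ v ∈ S, ∀ x : ZFSet, x ∈ v ↔ (x ∈ S ∧ x.rank < α)

/-- The Axiom of Determinacy holds in the transitive class `S` (which is
assumed to contain all the reals): every set of reals belonging to `S` is
determined. -/
def SatADIn (S : Set ZFSet.{0}) : Prop :=
  ∀ A : ZFSet, A ∈ S → A.toSet ⊆ zfReals → Determined {x : Baire | zfReal x ∈ A}

/-- `ϑ_α`: the least ordinal `ξ` such that
`L_ξ(ℝ) ⊨ KP + Separation + "V_α exists"`. -/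
def thetaAt (α : Ordinal.{0}) : Ordinal.{0} :=
  sInf {ξ | SatKPSep (memOn (LofR ξ)) ∧ HasVIn (LofR ξ) α}

open Ordinal in
/-- `ϑ = sup_{α < ω₁} ϑ_α`. -/
def theta : Ordinal.{0} := sSup (thetaAt '' {α : Ordinal.{0} | α < Ordinal.omega 1})


/-! ### Elementary embeddings, Woodin cardinals and extender models -/

/-- An elementary embedding between the `∈`-structures on two classes of sets. -/
structure ClassEmbedding (S T : Set ZFSet.{0}) where
  toFun : ZFSet → ZFSet
  maps : ∀ x ∈ S, toFun x ∈ T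
  elementary : ∀ (n : ℕ) (φ : setLang.BoundedFormula Empty n) (v : Fin n → S),
    SatBF (memOn S) φ v ↔ SatBF (memOn T) φ (fun i => ⟨toFun (v i), maps _ (v i).2⟩)

/-- `V_δ` as computed in the transitive class `S`. -/
def VclassIn (S : Set ZFSet.{0}) (δ : ZFSet) : Set ZFSet.{0} :=
  {x | x ∈ S ∧ x.rank < δ.rank}

/-- `δ` is a Woodin cardinal in the (transitive) class `S`: for every
`A ∈ S` with `A ⊆ V_δ^S` there is `κ < δ` which is `<δ`-`A`-strong in `S`,
as witnessed by elementary embeddings. -/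
def IsWoodinIn (S : Set ZFSet.{0}) (δ : ZFSet) : Prop :=
  δ ∈ S ∧ δ.IsOrdinal ∧
  ∀ A : ZFSet, A ∈ S → A.toSet ⊆ VclassIn S δ →
    ∃ κ : ZFSet, κ ∈ S ∧ κ.IsOrdinal ∧ κ.rank < δ.rank ∧
      ∀ lam : ZFSet, lam ∈ S → lam.IsOrdinal → κ.rank < lam.rank → lam.rank < δ.rank →
        ∃ (N : Set ZFSet.{0}) (j : ClassEmbedding S N),
          IsTransitiveClass N ∧
          (∀ x ∈ S, x.rank < κ.rank → j.toFun x = x) ∧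
          lam.rank < (j.toFun κ).rank ∧
          (∀ x : ZFSet, x.rank < lam.rank → (x ∈ S ↔ x ∈ N)) ∧
          (∀ x : ZFSet, x.rank < lam.rank → (x ∈ A ↔ x ∈ j.toFun A))

/-- `lam` is a limit of Woodin cardinals in `S`. -/
def IsLimitOfWoodinsIn (S : Set ZFSet.{0}) (lam : ZFSet) : Prop :=
  lam ∈ S ∧ lam.IsOrdinal ∧ (∃ δ, δ ∈ lam ∧ IsWoodinIn S δ) ∧
    ∀ ξ, ξ ∈ lam → ∃ δ, (ξ ∈ δ ∨ ξ = δ) ∧ δ ∈ lam ∧ IsWoodinIn S δ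

/-- Application of an internal (set-coded) function. -/
def zfApp (f a : ZFSet.{0}) : ZFSet.{0} :=
  letI := Classical.propDecidable (∃ b, ZFSet.pair a b ∈ f)
  if h : ∃ b, ZFSet.pair a b ∈ f then h.choose else ∅

/-- `E` is the `(κ, lam)`-extender over `S` derived from the embedding `j`:
`E` consists of the pairs `(a, X)` with `X ∈ S`, `a` a finite subset of `lam`
and `a ∈ j(X)`. -/
def DerivesExtender {S N : Set ZFSet.{0}} (j : ClassEmbedding S N) (κ lam E : ZFSet) : Prop :=
  κ ∈ S ∧ κ.IsOrdinal ∧ lam ∈ N ∧ lam.IsOrdinal ∧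
  (∀ x ∈ S, x.rank < κ.rank → j.toFun x = x) ∧
  κ.rank < (j.toFun κ).rank ∧
  ∀ p : ZFSet, p ∈ E ↔ ∃ a X : ZFSet, p = ZFSet.pair a X ∧ X ∈ S ∧
    a.toSet.Finite ∧ a.toSet ⊆ lam.toSet ∧ a ∈ j.toFun X

/-- A (wellfounded) ultrapower of the class `S` by the extender `E`:
a transitive class `target` together with an elementary embedding
`emb : S → target` deriving `E`, every element of `target` being of the form
`emb(f)(a)`. -/
structure UltrapowerOf (S : Set ZFSet.{0}) (E : ZFSet) where
  target : Set ZFSet.{0}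
  transitive : IsTransitiveClass target
  emb : ClassEmbedding S target
  crit : ZFSet
  lam : ZFSet
  derives : DerivesExtender emb crit lam E
  hull : ∀ y ∈ target, ∃ f ∈ S, ∃ a : ZFSet, a.toSet.Finite ∧ a.toSet ⊆ lam.toSet ∧
    y = zfApp (emb.toFun f) a

/-- A (coarse approximation of a fine-structural) extender model: a transitive
class together with its sequence of extenders. -/
structure ExtenderModel where
  carrier : Set ZFSet.{0}
  transitive : IsTransitiveClass carrier
  seq : Set ZFSet.{0}
  seq_sub : seq ⊆ carrier

/-- A finite iteration of the model `S0` with extender sequence `seq0`: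
at each step one takes the ultrapower by an extender on the (image of the)
sequence. -/
structure Iteration (S0 seq0 : Set ZFSet.{0}) (k : ℕ) where
  models : Fin (k + 1) → Set ZFSet.{0}
  seqs : Fin (k + 1) → Set ZFSet.{0}
  models_zero : models 0 = S0
  seqs_zero : seqs 0 = seq0
  step : ∀ i : Fin k, ∃ E : ZFSet, E ∈ seqs i.castSucc ∧
    ∃ u : UltrapowerOf (models i.castSucc) E, u.target = models i.succ ∧
      seqs i.succ = (fun z => u.emb.toFun z) '' seqs i.castSucc

/-- Countable iterability of an extender model: every countable transitive
class embeddable into it can be iterated by the extenders on (the images of)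
its sequence, all the ultrapowers being wellfounded (i.e. realizable as
transitive classes). -/
def CountablyIterable (W : ExtenderModel) : Prop :=
  ∀ S0 seq0 : Set ZFSet.{0}, S0.Countable → IsTransitiveClass S0 → seq0 ⊆ S0 →
    (∃ j : ClassEmbedding S0 W.carrier, ∀ E ∈ seq0, j.toFun E ∈ W.seq) →
    ∀ (k : ℕ) (it : Iteration S0 seq0 k) (E : ZFSet), E ∈ it.seqs (Fin.last k) →
      Nonempty (UltrapowerOf (it.models (Fin.last k)) E)

/-- Iterability of the model itself (our rendering of `ω₁`-iterability). -/
def FullyIterable (W : ExtenderModel) : Prop :=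
  ∀ (k : ℕ) (it : Iteration W.carrier W.seq k) (E : ZFSet), E ∈ it.seqs (Fin.last k) →
    Nonempty (UltrapowerOf (it.models (Fin.last k)) E)



/-! ### Internal notions in an arbitrary (possibly illfounded) model -/

section Internal

variable {M : Type u} (E : M → M → Prop)

/-- `x` is internally transitive in `(M, E)`. -/
def TransE (x : M) : Prop := ∀ y, E y x → ∀ z, E z y → E z x

/-- `x` is an internal ordinal of `(M, E)`: a transitive set of transitive
sets. -/
def IsOrdE (x : M) : Prop := TransE E x ∧ ∀ y, E y x → TransE E y

/-- `p` is internally the unordered pair `{x, y}`. -/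
def IsUPairE (p x y : M) : Prop := ∀ z, E z p ↔ (z = x ∨ z = y)

/-- `p` is internally the ordered (Kuratowski) pair `⟨x, y⟩`. -/
def IsOPairE (p x y : M) : Prop :=
  ∃ s t, IsUPairE E s x x ∧ IsUPairE E t x y ∧ IsUPairE E p s t

/-- The internal function (graph) `F` maps `b` to `v`. -/
def AppE (F b v : M) : Prop := ∃ p, E p F ∧ IsOPairE E p b v

/-- Internal `≤` on ordinals. -/
def ELe (b a : M) : Prop := E b a ∨ b = a

/-- `F` internally computes the cumulative hierarchy `b ↦ V_b` on the ordinals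
`b ≤ a`, via the recursion `V_b = {x : ∃ b' ∈ b, x ⊆ V_{b'}}`. -/
def IsVSeqE (F a : M) : Prop :=
  ∀ b, ELe E b a → (∃ v, AppE E F b v) ∧ ∀ v, AppE E F b v →
    ∀ x, E x v ↔ ∃ b' v', E b' b ∧ AppE E F b' v' ∧ ∀ y, E y x → E y v'

/-- `x` belongs to `(V_a)^M`, the internal cumulative hierarchy below the
internal ordinal `a` (a class of `M` which need not be an element of `M`). -/
def InVofE (x a : M) : Prop :=
  ∃ F v, IsVSeqE E F a ∧ AppE E F a v ∧ E x v

end Internal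

/-!
An element `x` of `(V_a)^M` satisfies `x ⊆ V_b` for some `b ∈ a`, and if `x ∈ y ⊆ V_b` then
`x ∈ V_b`, so that `x ⊆ V_{b'}` for some `b' ∈ b`. Hence an `∈`-descending sequence in `(V_a)^M`
would produce an `∈`-descending sequence of elements of `a`, which is impossible because the
`∈`-predecessors of `a` are ordered like the true ordinal `α`.
-/

theorem wellFounded_of_witnesses {α β : Type*} {r : α → α → Prop} {s : β → β → Prop}
    (hs : WellFounded s) (w : α → Set β) (hw : ∀ x, (w x).Nonempty)
    (hdesc : ∀ x y, r x y → ∀ b ∈ w y, ∃ b' ∈ w x, s b' b) : WellFounded r := by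
  have acc_of_mem : ∀ b x, b ∈ w x → Acc r x := by
    intro b
    induction b using hs.induction with
    | _ b ih =>
      intro x hbx
      refine ⟨x, fun y hyx => ?_⟩
      obtain ⟨b', hb'y, hb'b⟩ := hdesc y x hyx b hbx
      exact ih b' hb'b y hb'y
  exact ⟨fun x => acc_of_mem _ x (hw x).some_mem⟩

section Internal

variable {M : Type u} (E : M → M → Prop)

/-- The `b ∈ a` such that `x ⊆ V_b` for some internal `V`-sequence up to `a`. -/
def vSubsetStages (a x : M) : Set {b : M // E b a} :=
  {b | ∃ F v, IsVSeqE E F a ∧ AppE E F b.1 v ∧ ∀ y, E y x → E y v}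

variable {E}

theorem InVofE.vSubsetStages_nonempty {x a : M} (hx : InVofE E x a) :
    (vSubsetStages E a x).Nonempty := by
  obtain ⟨F, v, hF, hFa, hxv⟩ := hx
  obtain ⟨b, v', hba, hFb, hxv'⟩ := ((hF a (Or.inr rfl)).2 v hFa x).mp hxv
  exact ⟨⟨b, hba⟩, F, v', hF, hFb, hxv'⟩

theorem exists_mem_vSubsetStages_of_mem {a x y : M} (ha : TransE E a) (hxy : E x y)
    {b : {b : M // E b a}} (hb : b ∈ vSubsetStages E a y) :
    ∃ b' ∈ vSubsetStages E a x, E b'.1 b.1 := by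
  obtain ⟨F, v, hF, hFb, hyv⟩ := hb
  obtain ⟨b', v', hb'b, hFb', hxv'⟩ := ((hF b.1 (Or.inl b.2)).2 v hFb x).mp (hyv x hxy)
  exact ⟨⟨b', ha b.1 b.2 b' hb'b⟩, ⟨F, v', hF, hFb', hxv'⟩, hb'b⟩

end Internal

theorem internal_V_a_wellfounded_general {M : Type u} (E : M → M → Prop)
    (a : M) (haOrd : IsOrdE E a) (α : Ordinal.{0})
    (hiso : Nonempty ((fun x y : {z : M // E z a} => E x.1 y.1) ≃r
      (fun x y : Set.Iio α => (x : Ordinal.{0}) < (y : Ordinal.{0})))) :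
    WellFounded (fun x y : {z : M // InVofE E z a} => E x.1 y.1) := by
  obtain ⟨e⟩ := hiso
  have hwf : WellFounded (fun x y : {z : M // E z a} => E x.1 y.1) :=
    e.toRelEmbedding.wellFounded (InvImage.wf _ Ordinal.lt_wf)
  exact wellFounded_of_witnesses hwf (fun x => vSubsetStages E a x.1)
    (fun x => x.2.vSubsetStages_nonempty)
    (fun x y hxy _ hb => exists_mem_vSubsetStages_of_mem haOrd.1 hxy hb)

/-- **Theorem (Statement 5).**  If `M` is a model of `KP` containing an
ordinal `a` whose predecessors are isomorphic to a (true) ordinal `α`, then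
the class `(V_a)^M`, computed inside `M`, is wellfounded. -/
theorem internal_V_a_wellfounded {M : Type u} (E : M → M → Prop)
    (hKP : SatKP E) (a : M) (haOrd : IsOrdE E a) (α : Ordinal.{0})
    (hiso : Nonempty ((fun x y : {z : M // E z a} => E x.1 y.1) ≃r
      (fun x y : Set.Iio α => (x : Ordinal.{0}) < (y : Ordinal.{0})))) :
    WellFounded (fun x y : {z : M // InVofE E z a} => E x.1 y.1) :=
  internal_V_a_wellfounded_general E a haOrd α hiso

end LongBorel
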